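/- Let (M,d) be a compact metric space, f : M → M a continuous map, μ a Borel probability measure on M, and p ∈ M a point whose empirical measures converge to μ, i.e., (1/j) Σ_{i=0}^{j−1} δ_{f^i(p)} → μ in the weak* topology as j → ∞. Suppose (f_n)_{n≥1} is a sequence of continuous maps f_n : M → M and (p_n)_{n≥1} a sequence of points such that each p_n is a periodic point of f_n with period π_n ≥ 1 (i.e., f_n^{π_n}(p_n) = p_n), π_n → ∞ as n → ∞, and d(f^j(p), f_n^j(p_n)) ≤ 1/n for all 0 ≤ j ≤ π_n. Then the measures μ_n = (1/π_n) Σ_{i=0}^{π_n−1} δ_{f_n^i(p_n)} converge to μ in the weak* topology as n → ∞. -/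

import Mathlib

open MeasureTheory Filter Topology

noncomputable def empiricalMeasure {M : Type*} [MeasurableSpace M]
    (T : M → M) (x : M) (k : ℕ) : Measure M :=
  (k : ENNReal)⁻¹ • ∑ i ∈ Finset.range k, Measure.dirac (T^[i] x)

theorem integral_empiricalMeasure {M E : Type*} [MeasurableSpace M]
    [MeasurableSingletonClass M] [NormedAddCommGroup E] [NormedSpace ℝ E] [CompleteSpace E]
    (g : M → E) (T : M → M) (x : M) (k : ℕ) :
    ∫ y, g y ∂(empiricalMeasure T x k) = birkhoffAverage ℝ T g k x := by
  have hint (a : M) : Integrable g (Measure.dirac a) := integrable_dirac enorm_lt_top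
  rw [empiricalMeasure, integral_smul_measure, integral_finsetSum_measure fun i _ ↦ hint _]
  simp [birkhoffAverage, birkhoffSum, integral_dirac, ENNReal.toReal_inv]

section Shadowing

variable {𝕜 X E ι : Type*} [RCLike 𝕜] [NormedAddCommGroup E] [NormedSpace 𝕜 E]

theorem dist_birkhoffAverage_birkhoffAverage_le_of_forall_lt (f₁ f₂ : X → X) (g : X → E)
    (n : ℕ) (x₁ x₂ : X) {ε : ℝ} (hε : 0 ≤ ε)
    (h : ∀ k < n, dist (g (f₁^[k] x₁)) (g (f₂^[k] x₂)) ≤ ε) :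
    dist (birkhoffAverage 𝕜 f₁ g n x₁) (birkhoffAverage 𝕜 f₂ g n x₂) ≤ ε := by
  rcases n.eq_zero_or_pos with rfl | hn
  · simpa using hε
  have hsum : dist (birkhoffSum f₁ g n x₁) (birkhoffSum f₂ g n x₂) ≤ n * ε :=
    calc dist (birkhoffSum f₁ g n x₁) (birkhoffSum f₂ g n x₂)
        ≤ ∑ k ∈ Finset.range n, dist (g (f₁^[k] x₁)) (g (f₂^[k] x₂)) :=
          dist_sum_sum_le _ _ _
      _ ≤ n * ε := by
        simpa using Finset.sum_le_card_nsmul _ _ _ fun k hk ↦ h k (Finset.mem_range.1 hk)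
  rwa [birkhoffAverage, birkhoffAverage, dist_smul₀, norm_inv, RCLike.norm_natCast,
    inv_mul_le_iff₀ (by exact_mod_cast hn)]

theorem Filter.Tendsto.birkhoffAverage_of_shadowing [PseudoMetricSpace X] {g : X → E}
    (hg : UniformContinuous g) {f : X → X} {x : X} {fs : ι → X → X} {xs : ι → X}
    {N : ι → ℕ} {l : Filter ι} {a : E}
    (hlim : Tendsto (fun n ↦ birkhoffAverage 𝕜 f g (N n) x) l (𝓝 a))
    (hshadow : ∀ ε > 0, ∀ᶠ n in l, ∀ k < N n, dist (f^[k] x) ((fs n)^[k] (xs n)) < ε) :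
    Tendsto (fun n ↦ birkhoffAverage 𝕜 (fs n) g (N n) (xs n)) l (𝓝 a) := by
  refine hlim.congr_dist (Metric.tendsto_nhds.2 fun ε hε ↦ ?_)
  obtain ⟨δ, hδ, hgδ⟩ := Metric.uniformContinuous_iff.1 hg (ε / 2) (half_pos hε)
  filter_upwards [hshadow δ hδ] with n hn
  rw [Real.dist_0_eq_abs, abs_dist]
  exact (dist_birkhoffAverage_birkhoffAverage_le_of_forall_lt _ _ _ _ _ _ (half_pos hε).le
    fun k hk ↦ (hgδ (hn k hk)).le).trans_lt (half_lt_self hε)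

end Shadowing

theorem periodic_orbit_measures_tendsto_general
    {M : Type*} [MetricSpace M] [CompactSpace M] [MeasurableSpace M] [BorelSpace M]
    (f : M → M)
    (μ : Measure M) (p : M)
    (hemp : ∀ g : C(M, ℝ),
      Tendsto (fun j => ∫ x, g x ∂(empiricalMeasure f p j)) atTop (𝓝 (∫ x, g x ∂μ)))
    (fs : ℕ → M → M)
    (ps : ℕ → M) (π : ℕ → ℕ)
    (hπ : Tendsto π atTop atTop)
    (hshadow : ∀ n, 1 ≤ n → ∀ j ≤ π n, dist (f^[j] p) ((fs n)^[j] (ps n)) ≤ 1 / n) :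
    ∀ g : C(M, ℝ),
      Tendsto (fun n => ∫ x, g x ∂(empiricalMeasure (fs n) (ps n) (π n))) atTop
        (𝓝 (∫ x, g x ∂μ)) := by
  intro g
  simp only [integral_empiricalMeasure] at hemp ⊢
  refine ((hemp g).comp hπ).birkhoffAverage_of_shadowing
    (CompactSpace.uniformContinuous_of_continuous g.continuous) fun ε hε ↦ ?_
  filter_upwards [eventually_ge_atTop 1,
    tendsto_one_div_atTop_nhds_zero_nat.eventually (gt_mem_nhds hε)] with n hn hnε k hk
  exact (hshadow n hn k hk.le).trans_lt hnε

/-- If the empirical measures of `p` under `f` converge weakly* to `μ`, and `p n` is a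
periodic point of `f n` of period `π n → ∞` whose orbit `1/n`-shadows the orbit of `p`,
then the periodic orbit measures `(1/π n) ∑_{i<π n} δ_{(f n)^i (p n)}` also converge
weakly* to `μ`. -/
theorem periodic_orbit_measures_tendsto
    {M : Type*} [MetricSpace M] [CompactSpace M] [MeasurableSpace M] [BorelSpace M]
    (f : M → M) (hf : Continuous f)
    (μ : Measure M) [IsProbabilityMeasure μ] (p : M)
    (hemp : ∀ g : C(M, ℝ),
      Tendsto (fun j => ∫ x, g x ∂(empiricalMeasure f p j)) atTop (𝓝 (∫ x, g x ∂μ)))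
    (fs : ℕ → M → M) (hfs : ∀ n, Continuous (fs n))
    (ps : ℕ → M) (π : ℕ → ℕ)
    (hπ1 : ∀ n, 1 ≤ π n)
    (hper : ∀ n, (fs n)^[π n] (ps n) = ps n)
    (hπ : Tendsto π atTop atTop)
    (hshadow : ∀ n, 1 ≤ n → ∀ j ≤ π n, dist (f^[j] p) ((fs n)^[j] (ps n)) ≤ 1 / n) :
    ∀ g : C(M, ℝ),
      Tendsto (fun n => ∫ x, g x ∂(empiricalMeasure (fs n) (ps n) (π n))) atTop
        (𝓝 (∫ x, g x ∂μ)) :=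
  periodic_orbit_measures_tendsto_general f μ p hemp fs ps π hπ hshadow
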